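/- (Uniqueness criterion.) Let K be a bounded non-negative contraction (0 ≤ K ≤ I) on a complex Hilbert space H, M a closed subspace of H, N = M^⊥, and T = P_M K|_M, Γ = P_N K|_M, S = P_N K|_N the compressions of K. For ε > 0 let Λ_{1,ε} = P_N (K + εI)^{-1}|_N and Λ_{2,ε} = P_N ((1+ε)I − K)^{-1}|_N, and suppose G₁, G₂ are bounded operators on N such that Λ_{1,ε}^{-1} y → G₁ y and Λ_{2,ε}^{-1} y → G₂ y for every y ∈ N as ε → 0⁺. Then the following are equivalent: (i) G₁ = 0 and G₂ = 0; (ii) the only bounded self-adjoint operator X on N for which the block operator K_X = [[T, Γ*],[Γ, X]] is a non-negative contraction is X = S (i.e. K is the unique non-negative contractive extension to H of its restriction to M). -/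

import Mathlib

/-!
Write `K_X = K + (X - S) ⊕ 0`. For `ε > 0` the operator `Λ_{1,ε}⁻¹` is the Schur complement of
`K + ε` onto `N`: its quadratic form at `n` is the minimum of `⟪(K + ε) w, w⟫` over the fibre
`P_N w = n`, attained at `w = (K + ε)⁻¹ Λ_{1,ε}⁻¹ n`. Letting `ε → 0`, `G₁` is the short of `K` to
`N`, i.e. `⟪G₁ n, n⟫ = inf {⟪K w, w⟫ | P_N w = n}`, and likewise `G₂` is the short of `I - K`.
Hence `K_X ≥ 0` iff `S - G₁ ≤ X`, and `K_X ≤ I` iff `X ≤ S + G₂`: the admissible `X` form the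
order interval `[S - G₁, S + G₂]`, which reduces to `{S}` exactly when `G₁ = G₂ = 0`.
-/

open ContinuousLinearMap

/-- The block operator `[[T, Γ*],[Γ, X]]` on `H` relative to the decomposition `H = M ⊕ Mᗮ`,
sending `m + n` (`m ∈ M`, `n ∈ Mᗮ`) to `(Tm + Γ*n) + (Γm + Xn)`. -/
noncomputable def blockOpH
    {H : Type*} [NormedAddCommGroup H] [InnerProductSpace ℂ H] [CompleteSpace H]
    (M : Submodule ℂ H) [CompleteSpace M]
    (T : M →L[ℂ] M) (Γ : M →L[ℂ] Mᗮ) (X : Mᗮ →L[ℂ] Mᗮ) : H →L[ℂ] H :=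
  M.subtypeL.comp
      (T.comp (Submodule.orthogonalProjectionOnto M) +
        (ContinuousLinearMap.adjoint Γ).comp (Submodule.orthogonalProjectionOnto Mᗮ)) +
    Mᗮ.subtypeL.comp
      (Γ.comp (Submodule.orthogonalProjectionOnto M) + X.comp (Submodule.orthogonalProjectionOnto Mᗮ))

open Filter Topology RCLike
open scoped Ring InnerProductSpace InnerProduct

theorem isGLB_of_isLeast_add_mul_of_tendsto {α : Type*} {s : Set α} {f g : α → ℝ}
    (hg : ∀ x, 0 ≤ g x) {v : ℝ → ℝ} {c : ℝ}
    (hv : ∀ ε : ℝ, 0 < ε → IsLeast ((fun x => f x + ε * g x) '' s) (v ε))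
    (hc : Tendsto v (𝓝[>] 0) (𝓝 c)) : IsGLB (f '' s) c := by
  refine ⟨?_, fun r hr => ge_of_tendsto hc ?_⟩
  · rintro _ ⟨x, hx, rfl⟩
    have hfx : Tendsto (fun ε : ℝ => f x + ε * g x) (𝓝[>] 0) (𝓝 (f x)) :=
      ((show Continuous fun ε : ℝ => f x + ε * g x by fun_prop).tendsto' 0 _ (by simp)).mono_left
        nhdsWithin_le_nhds
    refine le_of_tendsto_of_tendsto hc hfx ?_
    filter_upwards [self_mem_nhdsWithin] with ε hε using (hv ε hε).2 ⟨x, hx, rfl⟩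
  · filter_upwards [self_mem_nhdsWithin] with ε hε
    refine (hv ε hε).isGLB.2 ?_
    rintro _ ⟨x, hx, rfl⟩
    have := hr ⟨x, hx, rfl⟩
    have := mul_nonneg (le_of_lt hε) (hg x)
    simp only
    linarith

section InnerProductSpace

variable {𝕜 H : Type*} [RCLike 𝕜] [NormedAddCommGroup H] [InnerProductSpace 𝕜 H]

namespace ContinuousLinearMap

theorem IsPositive.re_inner_le_of_inner_eq_zero {U : H →L[𝕜] H} (hU : U.IsPositive) {h d : H}
    (hd : ⟪U h, d⟫_𝕜 = 0) : re ⟪U h, h⟫_𝕜 ≤ re ⟪U (h + d), h + d⟫_𝕜 := by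
  have hd' : ⟪U d, h⟫_𝕜 = 0 := by
    rw [hU.inner_left_eq_inner_right, ← inner_conj_symm, hd, map_zero]
  have := hU.re_inner_nonneg_left d
  simp only [map_add, inner_add_left, inner_add_right, hd, hd', zero_add, add_zero]
  linarith

theorem re_inner_add_smul_one_apply_self (A : H →L[𝕜] H) (ε : ℝ) (w : H) :
    re ⟪(A + (ε : 𝕜) • 1) w, w⟫_𝕜 = re ⟪A w, w⟫_𝕜 + ε * ‖w‖ ^ 2 := by
  simp [inner_add_left, inner_smul_left]

theorem IsPositive.add_smul_one {A : H →L[𝕜] H} (hA : A.IsPositive) {ε : ℝ} (hε : 0 ≤ ε) :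
    (A + (ε : 𝕜) • 1).IsPositive :=
  hA.add (isPositive_one.smul_of_nonneg (by exact_mod_cast hε))

variable [CompleteSpace H]

theorem IsPositive.isUnit_add_smul_one {A : H →L[𝕜] H} (hA : A.IsPositive) {ε : ℝ} (hε : 0 < ε) :
    IsUnit (A + (ε : 𝕜) • 1) := by
  lift ε to NNReal using hε.le
  refine isUnit_of_forall_le_norm_inner_map _ hε fun x => ?_
  calc ‖x‖ ^ 2 * ε ≤ re ⟪(A + ((ε : ℝ) : 𝕜) • 1) x, x⟫_𝕜 := by
        rw [re_inner_add_smul_one_apply_self]; linarith [hA.re_inner_nonneg_left x]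
    _ ≤ ‖⟪(A + ((ε : ℝ) : 𝕜) • 1) x, x⟫_𝕜‖ := re_le_norm _

theorem isSelfAdjoint_of_tendsto {ι : Type*} {l : Filter ι} [l.NeBot] {F : ι → H →L[𝕜] H}
    {G : H →L[𝕜] H} (hF : ∀ᶠ i in l, IsSelfAdjoint (F i))
    (hG : ∀ x, Tendsto (fun i => F i x) l (𝓝 (G x))) : IsSelfAdjoint G := by
  rw [isSelfAdjoint_iff_isSymmetric]
  intro x y
  refine tendsto_nhds_unique (((hG x).inner tendsto_const_nhds).congr' ?_)
    (tendsto_const_nhds.inner (hG y))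
  filter_upwards [hF] with i hi using hi.isSymmetric x y

end ContinuousLinearMap

variable (N : Submodule 𝕜 H) [CompleteSpace N]

noncomputable def extendByZero (Y : N →L[𝕜] N) : H →L[𝕜] H :=
  N.subtypeL ∘L Y ∘L N.orthogonalProjectionOnto

/-- `G` is the short of `A` to `N` in the sense of Anderson–Trapp. -/
structure IsShortedOperator (A : H →L[𝕜] H) (G : N →L[𝕜] N) : Prop where
  isSelfAdjoint : IsSelfAdjoint G
  isGLB (n : N) : IsGLB ((fun w => re ⟪A w, w⟫_𝕜) '' {w | N.orthogonalProjectionOnto w = n})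
    (re ⟪G n, n⟫_𝕜)

variable {N}

theorem inner_extendByZero_apply_self (Y : N →L[𝕜] N) (w : H) :
    ⟪extendByZero N Y w, w⟫_𝕜 =
      ⟪Y (N.orthogonalProjectionOnto w), N.orthogonalProjectionOnto w⟫_𝕜 := by
  simp [extendByZero]

theorem extendByZero_sub (X Y : N →L[𝕜] N) :
    extendByZero N (X - Y) = extendByZero N X - extendByZero N Y := by
  simp [extendByZero, sub_comp, comp_sub]

theorem ContinuousLinearMap.IsPositive.isLeast_re_inner_ringInverse_compression {U : H →L[𝕜] H}
    (hU : U.IsPositive) (hUu : IsUnit U)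
    (hΛu : IsUnit (N.orthogonalProjectionOnto ∘L U⁻¹ʳ ∘L N.subtypeL)) (n : N) :
    IsLeast ((fun w => re ⟪U w, w⟫_𝕜) '' {w | N.orthogonalProjectionOnto w = n})
      (re ⟪(N.orthogonalProjectionOnto ∘L U⁻¹ʳ ∘L N.subtypeL)⁻¹ʳ n, n⟫_𝕜) := by
  set Λ := N.orthogonalProjectionOnto ∘L U⁻¹ʳ ∘L N.subtypeL
  set k := Λ⁻¹ʳ n
  set h := U⁻¹ʳ k
  have hUh : U h = k := DFunLike.congr_fun (Ring.mul_inverse_cancel U hUu) (k : H)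
  have hPh : N.orthogonalProjectionOnto h = n :=
    DFunLike.congr_fun (Ring.mul_inverse_cancel Λ hΛu) n
  -- `U h ∈ N` is orthogonal to every direction `w - h` within the fibre
  have horth : ∀ w, N.orthogonalProjectionOnto w = n → ⟪U h, w - h⟫_𝕜 = 0 := by
    intro w hw
    rw [hUh, ← N.inner_orthogonalProjectionOnto_eq_of_mem_left, map_sub, hw, hPh, sub_self,
      inner_zero_right]
  have hval : re ⟪U h, h⟫_𝕜 = re ⟪k, n⟫_𝕜 := by
    rw [hUh, ← N.inner_orthogonalProjectionOnto_eq_of_mem_left, hPh]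
  refine ⟨⟨h, hPh, hval⟩, ?_⟩
  rintro _ ⟨w, hw, rfl⟩
  simpa [hval] using hU.re_inner_le_of_inner_eq_zero (horth w hw)

theorem IsShortedOperator.isPositive {A : H →L[𝕜] H} {G : N →L[𝕜] N}
    (hG : IsShortedOperator N A G) (hA : A.IsPositive) : G.IsPositive := by
  refine isPositive_def'.mpr ⟨hG.isSelfAdjoint, fun n => (hG.isGLB n).2 ?_⟩
  rintro _ ⟨w, -, rfl⟩
  exact hA.re_inner_nonneg_left w

variable [CompleteSpace H]

theorem IsSelfAdjoint.extendByZero {Y : N →L[𝕜] N} (hY : IsSelfAdjoint Y) :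
    IsSelfAdjoint (extendByZero N Y) := by
  simpa [_root_.extendByZero, N.adjoint_subtypeL] using hY.conj_adjoint N.subtypeL

theorem IsSelfAdjoint.compression {B : H →L[𝕜] H} (hB : IsSelfAdjoint B) :
    IsSelfAdjoint (N.orthogonalProjectionOnto ∘L B ∘L N.subtypeL) := by
  simpa [N.adjoint_orthogonalProjectionOnto] using hB.conj_adjoint N.orthogonalProjectionOnto

theorem ContinuousLinearMap.IsPositive.isShortedOperator_of_tendsto {A : H →L[𝕜] H}
    (hA : A.IsPositive) {Λ : ℝ → N →L[𝕜] N}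
    (hΛ : ∀ ε : ℝ, Λ ε = N.orthogonalProjectionOnto ∘L (A + (ε : 𝕜) • 1)⁻¹ʳ ∘L N.subtypeL)
    (hΛu : ∀ ε : ℝ, 0 < ε → IsUnit (Λ ε)) {G : N →L[𝕜] N}
    (hG : ∀ y : N, Tendsto (fun ε : ℝ => (Λ ε)⁻¹ʳ y) (𝓝[>] 0) (𝓝 (G y))) :
    IsShortedOperator N A G := by
  refine ⟨isSelfAdjoint_of_tendsto ?_ hG, fun n => ?_⟩
  · filter_upwards [self_mem_nhdsWithin] with ε hε
    rw [hΛ]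
    exact (hA.add_smul_one (le_of_lt hε)).isSelfAdjoint.ringInverse.compression.ringInverse
  refine isGLB_of_isLeast_add_mul_of_tendsto (g := fun w => ‖w‖ ^ 2) (fun _ => sq_nonneg _)
    (fun ε hε => ?_)
    ((continuous_re.tendsto _).comp ((hG n).inner tendsto_const_nhds))
  simp only [← re_inner_add_smul_one_apply_self, Function.comp_apply]
  rw [hΛ]
  exact (hA.add_smul_one hε.le).isLeast_re_inner_ringInverse_compression
    (hA.isUnit_add_smul_one hε) (hΛ ε ▸ hΛu ε hε) n

namespace IsShortedOperator

variable {A : H →L[𝕜] H} {G : N →L[𝕜] N}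

theorem isPositive_add_extendByZero_iff (hG : IsShortedOperator N A G) (hA : IsSelfAdjoint A)
    {Y : N →L[𝕜] N} (hY : IsSelfAdjoint Y) :
    (A + extendByZero N Y).IsPositive ↔ (G + Y).IsPositive := by
  simp only [isPositive_def', hA.add hY.extendByZero,
    IsSelfAdjoint.add (R := N →L[𝕜] N) hG.isSelfAdjoint hY, true_and, reApplyInnerSelf_apply,
    add_apply, inner_add_left, map_add, inner_extendByZero_apply_self]
  constructor
  · intro h n
    suffices -re ⟪Y n, n⟫_𝕜 ≤ re ⟪G n, n⟫_𝕜 by linarith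
    refine (hG.isGLB n).2 ?_
    rintro _ ⟨w, hw, rfl⟩
    have := h w
    rw [hw] at this
    simp only
    linarith
  · intro h w
    have := (hG.isGLB (N.orthogonalProjectionOnto w)).1 ⟨w, rfl, rfl⟩
    have := h (N.orthogonalProjectionOnto w)
    linarith

theorem isPositive_add_extendByZero_sub_iff (hG : IsShortedOperator N A G)
    (hA : IsSelfAdjoint A) {X S : N →L[𝕜] N} (hX : IsSelfAdjoint X) (hS : IsSelfAdjoint S) :
    (A + extendByZero N (X - S)).IsPositive ↔ S - G ≤ X := by
  rw [hG.isPositive_add_extendByZero_iff hA (IsSelfAdjoint.sub (R := N →L[𝕜] N) hX hS),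
    ContinuousLinearMap.le_def, show X - (S - G) = G + (X - S) by abel]

theorem isPositive_one_sub_add_extendByZero_sub_iff (hG : IsShortedOperator N (1 - A) G)
    (hA : IsSelfAdjoint A) {X S : N →L[𝕜] N} (hX : IsSelfAdjoint X) (hS : IsSelfAdjoint S) :
    (1 - (A + extendByZero N (X - S))).IsPositive ↔ X ≤ S + G := by
  rw [show 1 - (A + extendByZero N (X - S)) = 1 - A + extendByZero N (S - X) by
      simp only [extendByZero_sub]; abel,
    hG.isPositive_add_extendByZero_iff ((IsSelfAdjoint.one _).sub hA)
      (IsSelfAdjoint.sub (R := N →L[𝕜] N) hS hX),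
    ContinuousLinearMap.le_def, show S + G - X = G + (S - X) by abel]

end IsShortedOperator

end InnerProductSpace

section BlockOperator

variable {H : Type*} [NormedAddCommGroup H] [InnerProductSpace ℂ H] [CompleteSpace H]
  {M : Submodule ℂ H} [CompleteSpace M]

theorem blockOpH_compressions_eq_self {K : H →L[ℂ] H} (hK : IsSelfAdjoint K) :
    blockOpH M (M.orthogonalProjectionOnto ∘L K ∘L M.subtypeL)
      (Mᗮ.orthogonalProjectionOnto ∘L K ∘L M.subtypeL)
      (Mᗮ.orthogonalProjectionOnto ∘L K ∘L Mᗮ.subtypeL) = K := by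
  have hΓ : (Mᗮ.orthogonalProjectionOnto ∘L K ∘L M.subtypeL)†
      = M.orthogonalProjectionOnto ∘L K ∘L Mᗮ.subtypeL := by
    simp [adjoint_comp, Submodule.adjoint_orthogonalProjectionOnto, Submodule.adjoint_subtypeL,
      hK.adjoint_eq, comp_assoc]
  have hsplit (v : H) :
      (M.orthogonalProjectionOnto v : H) + (Mᗮ.orthogonalProjectionOnto v : H) = v :=
    M.starProjection_add_starProjection_orthogonal v
  ext w
  simp only [blockOpH, hΓ, add_apply, comp_apply, Submodule.subtypeL_apply, Submodule.coe_add]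
  conv_rhs =>
    rw [← hsplit w, map_add, ← hsplit (K _), ← hsplit (K (Mᗮ.orthogonalProjectionOnto w : H))]
  abel

theorem blockOpH_sub_blockOpH (T : M →L[ℂ] M) (Γ : M →L[ℂ] Mᗮ) (X Y : Mᗮ →L[ℂ] Mᗮ) :
    blockOpH M T Γ X - blockOpH M T Γ Y = extendByZero Mᗮ (X - Y) := by
  ext w
  simp [blockOpH, extendByZero]

theorem blockOpH_eq_add_extendByZero {K : H →L[ℂ] H} (hK : IsSelfAdjoint K)
    {T : M →L[ℂ] M} {Γ : M →L[ℂ] Mᗮ} {S : Mᗮ →L[ℂ] Mᗮ}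
    (hT : T = M.orthogonalProjectionOnto ∘L K ∘L M.subtypeL)
    (hΓ : Γ = Mᗮ.orthogonalProjectionOnto ∘L K ∘L M.subtypeL)
    (hS : S = Mᗮ.orthogonalProjectionOnto ∘L K ∘L Mᗮ.subtypeL) (X : Mᗮ →L[ℂ] Mᗮ) :
    blockOpH M T Γ X = K + extendByZero Mᗮ (X - S) := by
  rw [← blockOpH_sub_blockOpH T Γ X S, hT, hΓ, hS, blockOpH_compressions_eq_self hK, add_sub_cancel]

end BlockOperator

/-- **uniqueness criterion.** With the notation of the theorem on non-negative
contractive extensions: `G₁ = 0` and `G₂ = 0` if and only if the only bounded self-adjoint `X`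
on `N = Mᗮ` for which the block operator `K_X = [[T, Γ*],[Γ, X]]` is a non-negative
contraction is `X = S`, i.e. `K` is the unique non-negative contractive extension to `H` of
its restriction to `M`. -/
theorem stmt_8
    {H : Type*} [NormedAddCommGroup H] [InnerProductSpace ℂ H] [CompleteSpace H]
    (K : H →L[ℂ] H) (hK : K.IsPositive) (hK1 : ((1 : H →L[ℂ] H) - K).IsPositive)
    (M : Submodule ℂ H) [CompleteSpace M]
    (T : M →L[ℂ] M) (Γ : M →L[ℂ] Mᗮ) (S : Mᗮ →L[ℂ] Mᗮ)
    (hT : T = (Submodule.orthogonalProjectionOnto M).comp (K.comp M.subtypeL))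
    (hΓ : Γ = (Submodule.orthogonalProjectionOnto Mᗮ).comp (K.comp M.subtypeL))
    (hS : S = (Submodule.orthogonalProjectionOnto Mᗮ).comp (K.comp Mᗮ.subtypeL))
    (Λ₁ Λ₂ : ℝ → (Mᗮ →L[ℂ] Mᗮ))
    (hΛ₁ : ∀ ε : ℝ, Λ₁ ε = (Submodule.orthogonalProjectionOnto Mᗮ).comp
      ((Ring.inverse (K + (ε : ℂ) • (1 : H →L[ℂ] H))).comp Mᗮ.subtypeL))
    (hΛ₂ : ∀ ε : ℝ, Λ₂ ε = (Submodule.orthogonalProjectionOnto Mᗮ).comp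
      ((Ring.inverse ((1 + ε : ℂ) • (1 : H →L[ℂ] H) - K)).comp Mᗮ.subtypeL))
    (hΛ₁u : ∀ ε : ℝ, 0 < ε → IsUnit (Λ₁ ε)) (hΛ₂u : ∀ ε : ℝ, 0 < ε → IsUnit (Λ₂ ε))
    (G₁ G₂ : Mᗮ →L[ℂ] Mᗮ)
    (hG₁ : ∀ y : Mᗮ, Filter.Tendsto (fun ε : ℝ => Ring.inverse (Λ₁ ε) y)
      (nhdsWithin 0 (Set.Ioi 0)) (nhds (G₁ y)))
    (hG₂ : ∀ y : Mᗮ, Filter.Tendsto (fun ε : ℝ => Ring.inverse (Λ₂ ε) y)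
      (nhdsWithin 0 (Set.Ioi 0)) (nhds (G₂ y)))
:
    (G₁ = 0 ∧ G₂ = 0) ↔
      ∀ X : Mᗮ →L[ℂ] Mᗮ, IsSelfAdjoint X →
        (blockOpH M T Γ X).IsPositive →
        ((1 : H →L[ℂ] H) - blockOpH M T Γ X).IsPositive → X = S := by
  have hKsa := hK.isSelfAdjoint
  have hSsa : IsSelfAdjoint S := hS ▸ hKsa.compression
  have hshort₁ := hK.isShortedOperator_of_tendsto hΛ₁ hΛ₁u hG₁
  have hshort₂ := hK1.isShortedOperator_of_tendsto
    (fun ε => (hΛ₂ ε).trans (by congr 3; module)) hΛ₂u hG₂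
  have hlower (X) (hX : IsSelfAdjoint X) : (blockOpH M T Γ X).IsPositive ↔ S - G₁ ≤ X := by
    rw [blockOpH_eq_add_extendByZero hKsa hT hΓ hS,
      hshort₁.isPositive_add_extendByZero_sub_iff hKsa hX hSsa]
  have hupper (X) (hX : IsSelfAdjoint X) : (1 - blockOpH M T Γ X).IsPositive ↔ X ≤ S + G₂ := by
    rw [blockOpH_eq_add_extendByZero hKsa hT hΓ hS,
      hshort₂.isPositive_one_sub_add_extendByZero_sub_iff hKsa hX hSsa]
  constructor
  · rintro ⟨rfl, rfl⟩ X hX hpos hcon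
    exact le_antisymm (by simpa using (hupper X hX).1 hcon) (by simpa using (hlower X hX).1 hpos)
  · intro huniq
    have hG₁_nonneg := (nonneg_iff_isPositive _).2 (hshort₁.isPositive hK)
    have hG₂_nonneg := (nonneg_iff_isPositive _).2 (hshort₂.isPositive hK1)
    have hinterval : S - G₁ ≤ S + G₂ :=
      (sub_le_self S hG₁_nonneg).trans (le_add_of_nonneg_right hG₂_nonneg)
    constructor
    · have hX := IsSelfAdjoint.sub (R := Mᗮ →L[ℂ] Mᗮ) hSsa hshort₁.isSelfAdjoint
      simpa using huniq _ hX ((hlower _ hX).2 le_rfl) ((hupper _ hX).2 hinterval)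
    · have hX := IsSelfAdjoint.add (R := Mᗮ →L[ℂ] Mᗮ) hSsa hshort₂.isSelfAdjoint
      simpa using huniq _ hX ((hlower _ hX).2 hinterval) ((hupper _ hX).2 le_rfl)
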